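/- Let (M,g,f) be an expanding m-quasi-Einstein manifold (λ < 0) with m > 1 and fiber constant μ ≤ 0, and suppose f ≥ −k for some constant k > 0 and R ≥ λn. Then |∇u|² ≤ −λ e^{2k/m}/(m−1), where u = e^{-f/m}. -/

import Mathlib

/-!
Taking the trace of the quasi-Einstein equation and using `R ≥ λn` gives `Δf ≤ |∇f|²/m`; inserting
this into the fiber equation `Δf − |∇f|² = mλ − mμ e^{2f/m}` bounds `|∇f|²`, and since
`|∇u|² = u²|∇f|²/m²` with `u² e^{2f/m} = 1` this becomes `(m − 1)|∇u|² ≤ −λu² + μ`.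
Finally `μ ≤ 0`, `λ < 0` and `u² = e^{−2f/m} ≤ e^{2k/m}`.
-/

open Real

theorem sub_one_mul_gradSq_le_of_trace {n m lam mu E R Δf gradf2 : ℝ} (hm : 0 < m)
    (htrace : R + Δf - (1 / m) * gradf2 = lam * n)
    (hfiber : Δf - gradf2 = m * lam - m * mu * E) (hR : lam * n ≤ R) :
    (m - 1) * gradf2 ≤ m ^ 2 * (mu * E - lam) := by
  have hΔf : m * Δf ≤ gradf2 :=
    calc m * Δf ≤ m * (1 / m * gradf2) := by gcongr; linarith
      _ = gradf2 := by field_simp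
  linear_combination hΔf - m * hfiber

theorem sub_one_mul_gradSq_le_of_sq_mul_eq_one {m lam mu E u gradf2 gradu2 : ℝ} (hm : m ≠ 0)
    (hgradu : gradu2 = u ^ 2 / m ^ 2 * gradf2) (huE : u ^ 2 * E = 1)
    (hgradf2 : (m - 1) * gradf2 ≤ m ^ 2 * (mu * E - lam)) :
    (m - 1) * gradu2 ≤ -lam * u ^ 2 + mu := by
  calc (m - 1) * gradu2 = u ^ 2 / m ^ 2 * ((m - 1) * gradf2) := by rw [hgradu]; ring
    _ ≤ u ^ 2 / m ^ 2 * (m ^ 2 * (mu * E - lam)) := by gcongr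
    _ = -lam * u ^ 2 + mu * (u ^ 2 * E) := by field_simp; ring
    _ = -lam * u ^ 2 + mu := by rw [huE, mul_one]

theorem exp_neg_div_sq_mul_exp_two_mul_div (f m : ℝ) (hm : m ≠ 0) :
    exp (-f / m) ^ 2 * exp (2 * f / m) = 1 := by
  rw [← exp_nat_mul, ← exp_add, exp_eq_one_iff]
  field_simp
  ring

theorem exp_neg_div_sq_le {f k m : ℝ} (hm : 0 < m) (hf : -k ≤ f) :
    exp (-f / m) ^ 2 ≤ exp (2 * k / m) := by
  rw [← exp_nat_mul, exp_le_exp, Nat.cast_ofNat, mul_div_assoc', div_le_div_iff_of_pos_right hm]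
  linarith

theorem expanding_quasiEinstein_gradient_bound_general {M : Type*}
    (n : ℕ) (m lam mu k : ℝ) (hm : 1 < m) (hlam : lam < 0) (hmu : mu ≤ 0)
    (f u R Δf gradf2 gradu2 : M → ℝ)
    (hf : ∀ x, -k ≤ f x)
    (hu : ∀ x, u x = Real.exp (-f x / m))
    (htrace : ∀ x, R x + Δf x - (1 / m) * gradf2 x = lam * n)
    (hfiber : ∀ x, Δf x - gradf2 x = m * lam - m * mu * Real.exp (2 * f x / m))
    (hgradu : ∀ x, gradu2 x = (u x) ^ 2 / m ^ 2 * gradf2 x)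
    (hR : ∀ x, lam * n ≤ R x) :
    ∀ x, gradu2 x ≤ -lam * Real.exp (2 * k / m) / (m - 1) := by
  intro x
  have hm0 : 0 < m := by linarith
  have hu2 : u x ^ 2 ≤ exp (2 * k / m) := hu x ▸ exp_neg_div_sq_le hm0 (hf x)
  have key : (m - 1) * gradu2 x ≤ -lam * u x ^ 2 + mu :=
    sub_one_mul_gradSq_le_of_sq_mul_eq_one hm0.ne' (hgradu x)
      (hu x ▸ exp_neg_div_sq_mul_exp_two_mul_div (f x) m hm0.ne')
      (sub_one_mul_gradSq_le_of_trace hm0 (htrace x) (hfiber x) (hR x))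
  rw [le_div_iff₀ (sub_pos.2 hm)]
  calc gradu2 x * (m - 1) = (m - 1) * gradu2 x := mul_comm _ _
    _ ≤ -lam * u x ^ 2 := by linarith
    _ ≤ -lam * exp (2 * k / m) := by gcongr; linarith

/-- On an expanding (λ < 0) m-quasi-Einstein manifold with m > 1, μ ≤ 0,
f ≥ −k (k > 0) and R ≥ λn, one has |∇u|² ≤ −λe^{2k/m}/(m−1) for u = e^{-f/m}. -/
theorem expanding_quasiEinstein_gradient_bound {M : Type*}
    (n : ℕ) (m lam mu k : ℝ) (hm : 1 < m) (hlam : lam < 0) (hmu : mu ≤ 0)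
    (hk : 0 < k)
    (f u R Δf gradf2 gradu2 : M → ℝ)
    (hf : ∀ x, -k ≤ f x)
    (hu : ∀ x, u x = Real.exp (-f x / m))
    (htrace : ∀ x, R x + Δf x - (1 / m) * gradf2 x = lam * n)
    (hfiber : ∀ x, Δf x - gradf2 x = m * lam - m * mu * Real.exp (2 * f x / m))
    (hgradu : ∀ x, gradu2 x = (u x) ^ 2 / m ^ 2 * gradf2 x)
    (hgradf2 : ∀ x, 0 ≤ gradf2 x)
    (hR : ∀ x, lam * n ≤ R x) :
    ∀ x, gradu2 x ≤ -lam * Real.exp (2 * k / m) / (m - 1) :=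
  expanding_quasiEinstein_gradient_bound_general n m lam mu k hm hlam hmu f u R Δf gradf2 gradu2 hf
    hu htrace hfiber hgradu hR
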